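/- The achievable rate (1/2)(1 − H(1/8)) for the single look-ahead ZS-channel is strictly greater than the no-look-ahead capacity 1 − H(1/4), where H denotes binary entropy in bits. -/
import Mathlib


/-- Binary entropy in bits. -/
noncomputable def binEnt (p : ℝ) : ℝ :=
  -(p * Real.logb 2 p) - ((1 - p) * Real.logb 2 (1 - p))

/-- The single look-ahead achievable rate `(1/2)(1 − H(1/8))` strictly exceeds
the no-look-ahead capacity `1 − H(1/4)` of the i.i.d. ZS-channel. -/
theorem zs_lookahead_rate_gt_causal_capacity :
    (1 : ℝ) - binEnt (1 / 4) < (1 / 2 : ℝ) * (1 - binEnt (1 / 8)) := by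
  have h2 : (0:ℝ) < Real.log 2 := Real.log_pos (by norm_num)
  have hne : Real.log 2 ≠ 0 := h2.ne'
  have key : 12 * Real.logb 2 3 < 7 * Real.logb 2 7 := by
    have h := Real.log_lt_log (by norm_num : (0:ℝ) < 531441)
      (by norm_num : (531441:ℝ) < 823543)
    rw [show (531441:ℝ) = 3 ^ 12 by norm_num, show (823543:ℝ) = 7 ^ 7 by norm_num,
      Real.log_pow, Real.log_pow] at h
    push_cast at h
    simp only [Real.logb]
    rw [mul_div_assoc', mul_div_assoc', div_lt_div_iff₀ h2 h2]
    nlinarith [h, h2]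
  have e14 : Real.logb 2 (1/4 : ℝ) = -2 := by
    rw [show (1/4 : ℝ) = (2:ℝ)^(-2 : ℤ) by norm_num, Real.logb, Real.log_zpow]
    push_cast
    field_simp
  have e34 : Real.logb 2 (3/4 : ℝ) = Real.logb 2 3 - 2 := by
    rw [show (3/4 : ℝ) = 3 / 2^2 by norm_num, Real.logb_div (by norm_num) (by norm_num),
      Real.logb_pow, Real.logb_self_eq_one (by norm_num)]
    ring
  have e18 : Real.logb 2 (1/8 : ℝ) = -3 := by
    rw [show (1/8 : ℝ) = (2:ℝ)^(-3 : ℤ) by norm_num, Real.logb, Real.log_zpow]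
    push_cast
    field_simp
  have e78 : Real.logb 2 (7/8 : ℝ) = Real.logb 2 7 - 3 := by
    rw [show (7/8 : ℝ) = 7 / 2^3 by norm_num, Real.logb_div (by norm_num) (by norm_num),
      Real.logb_pow, Real.logb_self_eq_one (by norm_num)]
    ring
  simp only [binEnt, show (1:ℝ) - 1/4 = 3/4 by norm_num,
    show (1:ℝ) - 1/8 = 7/8 by norm_num, e14, e34, e18, e78]
  linarith [key]
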